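/- arXiv:1711.10923 — 2 statements merged into one kernel-verified Lean document; each statement's English description precedes it below -/
import Mathlib

section
/- Let v ∈ B_PD \ {(1,2.5),(2.5,1)} and ε₁, ε₂ > 0, and suppose both players play the semi-cooperative strategies s₁^{v,ε₁} and s₂^{v,ε₂} determined by the same point v. Then every trajectory (x̄_t)_{t≥1} of the dynamical system induced by the profile (s₁^{v,ε₁}, s₂^{v,ε₂}), from any initial point in 𝔖, converges to v as t → ∞. -/
/- Semi-cooperative strategies in the repeated Prisoner's Dilemma (Section 4 of the
   paper). Actions: `true` = C (cooperate), `false` = D (defect). The payoff plane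
   is the Euclidean plane ℝ². -/

/-- The Euclidean plane. -/
abbrev E2 := EuclideanSpace ℝ (Fin 2)

/-- The point (a, b) of the Euclidean plane. -/
noncomputable def pt (a b : ℝ) : E2 := (WithLp.equiv 2 (Fin 2 → ℝ)).symm ![a, b]

/-- The vector payoff function of the Prisoner's Dilemma:
    u(C,C)=(2,2), u(C,D)=(0,3), u(D,C)=(3,0), u(D,D)=(1,1). -/
noncomputable def payoffPD : Bool → Bool → E2
  | true,  true  => pt 2 2
  | true,  false => pt 0 3
  | false, true  => pt 3 0
  | false, false => pt 1 1

/-- 𝔖 = conv{(2,2),(0,3),(3,0),(1,1)}. -/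
def SPD : Set E2 := convexHull ℝ {pt 2 2, pt 0 3, pt 3 0, pt 1 1}

/-- The set of β-core payoffs of the Prisoner's Dilemma:
    {(x, 3−x/2) : 1 ≤ x ≤ 2} ∪ {(3−y/2, y) : 1 ≤ y ≤ 2}. -/
def BPD : Set E2 :=
  {p | ∃ x : ℝ, 1 ≤ x ∧ x ≤ 2 ∧ p = pt x (3 - x / 2)} ∪
  {p | ∃ y : ℝ, 1 ≤ y ∧ y ≤ 2 ∧ p = pt (3 - y / 2) y}

/-- T₁(v) = {x ∈ 𝔖 : x₂ ≤ ((v₂−1)/(v₁−1))·x₁ + (v₁−v₂)/(v₁−1)}. -/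
def T1 (v : E2) : Set E2 :=
  {x ∈ SPD | x 1 ≤ (v 1 - 1) / (v 0 - 1) * x 0 + (v 0 - v 1) / (v 0 - 1)}

/-- T₂(v) = {x ∈ 𝔖 : x₂ ≥ ((v₂−1)/(v₁−1))·x₁ + (v₁−v₂)/(v₁−1)}. -/
def T2 (v : E2) : Set E2 :=
  {x ∈ SPD | (v 1 - 1) / (v 0 - 1) * x 0 + (v 0 - v 1) / (v 0 - 1) ≤ x 1}

/-- K₁(v,ε) = T₁(v)^ε ∩ {x ∈ 𝔖 : x₁ ≥ 1 and x₂ ≤ v₂}, where `·^ε` is the closed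
ε-neighbourhood. -/
def K1 (v : E2) (ε : ℝ) : Set E2 :=
  Metric.cthickening ε (T1 v) ∩ {x ∈ SPD | 1 ≤ x 0 ∧ x 1 ≤ v 1}

/-- K₂(v,ε) = T₂(v)^ε ∩ {x ∈ 𝔖 : x₁ ≤ v₁ and x₂ ≥ 1}. -/
def K2 (v : E2) (ε : ℝ) : Set E2 :=
  Metric.cthickening ε (T2 v) ∩ {x ∈ SPD | x 0 ≤ v 0 ∧ 1 ≤ x 1}

open Classical in
/-- The semi-cooperative strategy of player 1 determined by `v` and `ε`:
play C iff the current average payoff lies in K₁(v,ε). -/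
noncomputable def semi1 (v : E2) (ε : ℝ) (x : E2) : Bool :=
  if x ∈ K1 v ε then true else false

open Classical in
/-- The semi-cooperative strategy of player 2 determined by `v` and `ε`:
play C iff the current average payoff lies in K₂(v,ε). -/
noncomputable def semi2 (v : E2) (ε : ℝ) (x : E2) : Bool :=
  if x ∈ K2 v ε then true else false

/-- `x` is the trajectory (sequence of average payoffs), indexed from stage 1, of the
dynamical system induced by `f = u ∘ s`, starting at `x 1 ∈ 𝔖`:
x̄_{t+1} = (t·x̄_t + f(x̄_t))/(t+1). -/
def IsTrajPD (f : E2 → E2) (x : ℕ → E2) : Prop :=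
  x 1 ∈ SPD ∧ ∀ t : ℕ, 1 ≤ t →
    x (t + 1) = ((t : ℝ) + 1)⁻¹ • ((t : ℝ) • x t + f (x t))

open Filter

/-!
The point `v = (a, 3 - a/2)`, `1 < a ≤ 2`, of the first arc of `B_PD` lies on the edge
`y₁ + y₀/2 = 3` of `𝔖`; the second arc is its mirror image under exchanging the players.

For an affine `φ`, `φ (x̄ t)` is the running average of `φ` of the payoffs, so if the payoff
satisfies `φ ≤ θ` whenever `φ (x̄ t) > θ`, then `t * (φ (x̄ t) - θ)` stays bounded and
`φ (x̄ t) ≤ θ + o(1)` (a one-dimensional Blackwell argument). Player 2 defects beyond `v₀` and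
player 1 beyond `v₁`; `(C, D)` is never played above the line through `(1, 1)` and `v`, and
`(D, D)` only beyond `v`. So eventually `x̄ ≤ v + o(1)` coordinatewise, `x̄` is at most `o(1)`
above the line, and `x̄₀ + x̄₁ ≥ 3 - o(1)`. Then player 1, by the margin `ε₁` of the
thickening, defects only where `x̄₁ > v₁` next to the line, i.e. `o(1)`-close to the edge; since
his cooperation yields payoffs on the edge, the same argument pushes `x̄` onto the edge, and `v`
is the only point of the edge with both coordinates at most those of `v`.
-/

open Set Topology

@[simp] theorem pt_apply_zero (a b : ℝ) : pt a b 0 = a := rfl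
@[simp] theorem pt_apply_one (a b : ℝ) : pt a b 1 = b := rfl

theorem E2.ext {y z : E2} (h₀ : y 0 = z 0) (h₁ : y 1 = z 1) : y = z := by
  ext i
  fin_cases i <;> assumption

theorem dist_le_abs_add_abs (y z : E2) : dist y z ≤ |y 0 - z 0| + |y 1 - z 1| := by
  rw [EuclideanSpace.dist_eq, Fin.sum_univ_two, Real.sqrt_le_left (by positivity)]
  simp only [Real.dist_eq, sq_abs]
  nlinarith [abs_nonneg (y 0 - z 0), abs_nonneg (y 1 - z 1), sq_abs (y 0 - z 0),
    sq_abs (y 1 - z 1)]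

theorem tendsto_of_forall_abs_sub_le {α : Type*} {l : Filter α} {x : α → E2} {v : E2}
    (h : ∀ δ > 0, ∀ᶠ t in l, |x t 0 - v 0| ≤ δ ∧ |x t 1 - v 1| ≤ δ) : Tendsto x l (𝓝 v) :=
  Metric.tendsto_nhds.2 fun ε hε => (h (ε / 3) (by positivity)).mono fun t ht =>
    (dist_le_abs_add_abs _ _).trans_lt (by linarith [ht.1, ht.2])

theorem IsometryEquiv.preimage_cthickening {α β : Type*} [PseudoEMetricSpace α]
    [PseudoEMetricSpace β] (e : α ≃ᵢ β) (δ : ℝ) (s : Set β) :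
    e ⁻¹' Metric.cthickening δ s = Metric.cthickening δ (e ⁻¹' s) := by
  ext y
  rw [mem_preimage, Metric.mem_cthickening_iff, Metric.mem_cthickening_iff,
    ← Metric.infEDist_image e.isometry, e.surjective.image_preimage]

theorem SPD_subset : SPD ⊆ {y | 3 ≤ 2 * y 0 + y 1 ∧ 2 * y 0 + y 1 ≤ 6 ∧
    3 ≤ y 0 + 2 * y 1 ∧ y 0 + 2 * y 1 ≤ 6} := by
  refine convexHull_min ?_ ?_
  · rintro _ (rfl | rfl | rfl | rfl) <;> norm_num
  · intro y hy z hz a b ha hb hab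
    simp only [mem_ofPred_eq, PiLp.add_apply, PiLp.smul_apply, smul_eq_mul] at hy hz ⊢
    refine ⟨?_, ?_, ?_, ?_⟩ <;> nlinarith

theorem dist_le_six_of_mem_SPD {y z : E2} (hy : y ∈ SPD) (hz : z ∈ SPD) : dist y z ≤ 6 := by
  obtain ⟨hy₁, hy₂, hy₃, hy₄⟩ := SPD_subset hy
  obtain ⟨hz₁, hz₂, hz₃, hz₄⟩ := SPD_subset hz
  refine (dist_le_abs_add_abs y z).trans ?_
  have h₀ : |y 0 - z 0| ≤ 3 := abs_le.2 ⟨by linarith, by linarith⟩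
  have h₁ : |y 1 - z 1| ≤ 3 := abs_le.2 ⟨by linarith, by linarith⟩
  linarith

theorem payoffPD_mem_SPD (b c : Bool) : payoffPD b c ∈ SPD := by
  apply subset_convexHull
  cases b <;> cases c <;> simp [payoffPD]

theorem eventually_le_add_of_running_avg {y z : ℕ → ℝ} {θ δ : ℝ}
    (hyz : ∀ᶠ t : ℕ in atTop, ((t : ℝ) + 1) * y (t + 1) = t * y t + z t)
    (hz : BddAbove (range z)) (hθ : ∀ᶠ t in atTop, θ < y t → z t ≤ θ) (hδ : 0 < δ) :
    ∀ᶠ t in atTop, y t ≤ θ + δ := by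
  obtain ⟨M, hM⟩ := hz
  obtain ⟨T, hT⟩ := eventually_atTop.1 (hyz.and hθ)
  set K := max (T * (y T - θ)) (M - θ)
  -- `t * (y t - θ)` does not increase while `θ < y t`, and otherwise it is `≤ 0` before the step
  have hK : ∀ t, T ≤ t → (t : ℝ) * (y t - θ) ≤ K := by
    intro t ht
    induction t, ht using Nat.le_induction with
    | base => exact le_max_left _ _
    | succ t ht ih =>
      obtain ⟨hstep, hdrift⟩ := hT t ht
      have hzM : z t ≤ M := hM ⟨t, rfl⟩
      have hstep' : ((t + 1 : ℕ) : ℝ) * (y (t + 1) - θ) = t * (y t - θ) + (z t - θ) := by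
        push_cast
        linear_combination hstep
      rw [hstep']
      by_cases hy : θ < y t
      · linarith [hdrift hy]
      · have : (t : ℝ) * (y t - θ) ≤ 0 := mul_nonpos_of_nonneg_of_nonpos t.cast_nonneg (by linarith)
        linarith [le_max_right (T * (y T - θ)) (M - θ)]
  filter_upwards [(tendsto_order.1 (tendsto_const_div_atTop_nhds_zero_nat K)).2 δ hδ,
    eventually_ge_atTop T, eventually_ge_atTop 1] with t hKt hTt ht
  have htpos : (0 : ℝ) < t := by exact_mod_cast ht
  have := (le_div_iff₀' htpos).2 (hK t hTt)
  linarith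

section Trajectory

variable {f : E2 → E2} {x : ℕ → E2}

theorem IsTrajPD.mem_SPD (hf : ∀ y, f y ∈ SPD) (hx : IsTrajPD f x) {t : ℕ} (ht : 1 ≤ t) :
    x t ∈ SPD := by
  induction t, ht using Nat.le_induction with
  | base => exact hx.1
  | succ t ht ih =>
    have htpos : (0 : ℝ) < t + 1 := by positivity
    rw [hx.2 t ht, smul_add, smul_smul]
    exact convex_convexHull ℝ _ ih (hf _) (by positivity) (by positivity) (by field_simp)

theorem IsTrajPD.eventually_le_add (hf : (range f).Finite) (hx : IsTrajPD f x) {φ : E2 → ℝ}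
    (hφ : ∀ y z : E2, ∀ s : ℝ, φ ((1 - s) • y + s • z) = (1 - s) * φ y + s * φ z)
    {θ δ : ℝ} (hθ : ∀ᶠ t in atTop, θ < φ (x t) → φ (f (x t)) ≤ θ) (hδ : 0 < δ) :
    ∀ᶠ t in atTop, φ (x t) ≤ θ + δ := by
  refine eventually_le_add_of_running_avg ?_ ((hf.image φ).bddAbove.mono ?_) hθ hδ
  · filter_upwards [eventually_ge_atTop 1] with t ht
    have htpos : (t : ℝ) + 1 ≠ 0 := by positivity
    have hconv : x (t + 1) = (1 - ((t : ℝ) + 1)⁻¹) • x t + ((t : ℝ) + 1)⁻¹ • f (x t) := by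
      rw [hx.2 t ht, smul_add, smul_smul]
      congr 2
      field_simp
      ring
    rw [hconv, hφ]
    field_simp
    ring
  · rintro _ ⟨t, rfl⟩
    exact ⟨f (x t), ⟨x t, rfl⟩, rfl⟩

end Trajectory

noncomputable def semiProfile (v : E2) (ε₁ ε₂ : ℝ) (y : E2) : E2 :=
  payoffPD (semi1 v ε₁ y) (semi2 v ε₂ y)

theorem finite_range_semiProfile (v : E2) (ε₁ ε₂ : ℝ) : (range (semiProfile v ε₁ ε₂)).Finite :=
  (finite_range fun bc : Bool × Bool => payoffPD bc.1 bc.2).subset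
    (range_subset_iff.2 fun _ => ⟨(_, _), rfl⟩)

def side (v y : E2) : ℝ := (v 1 - 1) * (y 0 - 1) - (v 0 - 1) * (y 1 - 1)

section Strategies

variable {v y : E2} {ε ε₁ ε₂ : ℝ}

theorem semi1_eq_true : semi1 v ε y = true ↔ y ∈ K1 v ε := by simp [semi1]
theorem semi2_eq_true : semi2 v ε y = true ↔ y ∈ K2 v ε := by simp [semi2]

theorem line_eq_add_side (hv : 1 < v 0) (y : E2) :
    (v 1 - 1) / (v 0 - 1) * y 0 + (v 0 - v 1) / (v 0 - 1) = y 1 + side v y / (v 0 - 1) := by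
  have : v 0 - 1 ≠ 0 := by linarith
  unfold side
  field_simp
  ring

theorem mem_T1_iff (hv : 1 < v 0) : y ∈ T1 v ↔ y ∈ SPD ∧ 0 ≤ side v y := by
  simp only [T1, mem_ofPred_eq, line_eq_add_side hv, le_add_iff_nonneg_right,
    le_div_iff₀ (sub_pos.2 hv), zero_mul]

theorem mem_T2_iff (hv : 1 < v 0) : y ∈ T2 v ↔ y ∈ SPD ∧ side v y ≤ 0 := by
  simp only [T2, mem_ofPred_eq, line_eq_add_side hv, add_le_iff_nonpos_right,
    div_le_iff₀ (sub_pos.2 hv), zero_mul]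

theorem semi1_eq_false_of_lt (h : v 1 < y 1) : semi1 v ε y = false := by
  rw [← Bool.not_eq_true, semi1_eq_true]
  rintro ⟨-, -, -, h'⟩
  linarith

theorem semi2_eq_false_of_lt (h : v 0 < y 0) : semi2 v ε y = false := by
  rw [← Bool.not_eq_true, semi2_eq_true]
  rintro ⟨-, -, h', -⟩
  linarith

theorem side_neg_of_fst_lt_one (hv₀ : 1 < v 0) (hv₁ : 1 < v 1) (hy : y ∈ SPD) (h : y 0 < 1) :
    side v y < 0 := by
  obtain ⟨hy₁, -, -, -⟩ := SPD_subset hy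
  unfold side
  nlinarith [mul_pos (sub_pos.2 hv₁) (sub_pos.2 h), mul_pos (sub_pos.2 hv₀) (sub_pos.2 h)]

theorem side_pos_of_snd_lt_one (hv₀ : 1 < v 0) (hv₁ : 1 < v 1) (hy : y ∈ SPD) (h : y 1 < 1) :
    0 < side v y := by
  obtain ⟨-, -, hy₃, -⟩ := SPD_subset hy
  unfold side
  nlinarith [mul_pos (sub_pos.2 hv₁) (sub_pos.2 h), mul_pos (sub_pos.2 hv₀) (sub_pos.2 h)]

theorem mem_K2_of_mem_K1 (hv₀ : 1 < v 0) (hv₁ : 1 < v 1) (hy : y ∈ K1 v ε₁)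
    (hside : side v y ≤ 0) : y ∈ K2 v ε₂ := by
  obtain ⟨-, hS, hy₀, hy₁⟩ := hy
  unfold side at hside
  refine ⟨Metric.self_subset_cthickening _ ((mem_T2_iff hv₀).2 ⟨hS, hside⟩), hS, ?_, ?_⟩
  · nlinarith [mul_le_mul_of_nonneg_left hy₁ (sub_pos.2 hv₀).le]
  · nlinarith [mul_nonneg (sub_pos.2 hv₁).le (sub_nonneg.2 hy₀)]

theorem lt_of_notMem_K1_of_notMem_K2 (hv₀ : 1 < v 0) (hv₁ : 1 < v 1) (hy : y ∈ SPD)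
    (h₁ : y ∉ K1 v ε₁) (h₂ : y ∉ K2 v ε₂) : v 0 < y 0 ∧ v 1 < y 1 := by
  rcases le_total 0 (side v y) with hside | hside
  · have hT := Metric.self_subset_cthickening (δ := ε₁) _ ((mem_T1_iff hv₀).2 ⟨hy, hside⟩)
    have hy₀ : 1 ≤ y 0 := not_lt.1 fun h => (side_neg_of_fst_lt_one hv₀ hv₁ hy h).not_ge hside
    have hy₁ : v 1 < y 1 := not_le.1 fun h => h₁ ⟨hT, hy, hy₀, h⟩
    unfold side at hside
    exact ⟨by nlinarith, hy₁⟩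
  · have hT := Metric.self_subset_cthickening (δ := ε₂) _ ((mem_T2_iff hv₀).2 ⟨hy, hside⟩)
    have hy₁ : 1 ≤ y 1 := not_lt.1 fun h => (side_pos_of_snd_lt_one hv₀ hv₁ hy h).not_ge hside
    have hy₀ : v 0 < y 0 := not_le.1 fun h => h₂ ⟨hT, hy, h, hy₁⟩
    unfold side at hside
    exact ⟨hy₀, by nlinarith⟩

/-- Move from `y` towards `(3, 0) ∈ T₁(v)` until the line through `(1, 1)` and `v` is reached. -/
theorem mem_cthickening_T1 (hv₀ : 1 < v 0) (hv₁ : 1 < v 1) (hy : y ∈ SPD)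
    (hside : -(ε * side v (pt 3 0) / 6) ≤ side v y) : y ∈ Metric.cthickening ε (T1 v) := by
  rcases le_or_gt 0 (side v y) with hL | hL
  · exact Metric.self_subset_cthickening _ ((mem_T1_iff hv₀).2 ⟨hy, hL⟩)
  set L := side v y
  set G := side v (pt 3 0)
  have hG : 0 < G := by simp only [G, side, pt_apply_zero, pt_apply_one]; linarith
  set s := -L / (G - L)
  have hs₀ : 0 ≤ s := div_nonneg (by linarith) (by linarith)
  have hs₁ : s ≤ 1 := (div_le_one (by linarith)).2 (by linarith)
  have hsL : s * (G - L) = -L := div_mul_cancel₀ _ (by linarith)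
  have hc : pt 3 0 ∈ SPD := payoffPD_mem_SPD false true
  refine Metric.mem_cthickening_of_dist_le y (AffineMap.lineMap y (pt 3 0) s) ε _
    ((mem_T1_iff hv₀).2 ⟨(convex_convexHull ℝ _).lineMap_mem hy hc ⟨hs₀, hs₁⟩, le_of_eq ?_⟩) ?_
  · simp only [side, L, G, AffineMap.lineMap_apply_module, PiLp.add_apply, PiLp.smul_apply,
      smul_eq_mul] at hsL ⊢
    linear_combination -hsL
  · rw [dist_left_lineMap, Real.norm_eq_abs, abs_of_nonneg hs₀]
    have hsG : s * G ≤ -L := by nlinarith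
    nlinarith [dist_le_six_of_mem_SPD hy hc, dist_nonneg (x := y) (y := pt 3 0)]

theorem exists_side_lt_of_notMem_K1 (hv₀ : 1 < v 0) (hv₁ : 1 < v 1) (hε : 0 < ε) :
    ∃ μ > 0, ∀ y ∈ SPD, y ∉ K1 v ε → side v y < -μ ∨ y 0 < 1 ∨ v 1 < y 1 := by
  have hG : 0 < side v (pt 3 0) := by simp only [side, pt_apply_zero, pt_apply_one]; linarith
  refine ⟨ε * side v (pt 3 0) / 6, by positivity, fun y hy hK => ?_⟩
  by_contra! h
  exact hK ⟨mem_cthickening_T1 hv₀ hv₁ hy h.1, hy, h.2.1, h.2.2⟩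

end Strategies

section Symmetry

variable {v : E2}

noncomputable def swapPlayers : E2 ≃ₗᵢ[ℝ] E2 :=
  LinearIsometryEquiv.piLpCongrLeft 2 ℝ ℝ (Equiv.swap 0 1)

@[simp] theorem swapPlayers_apply_zero (y : E2) : swapPlayers y 0 = y 1 := by simp [swapPlayers]
@[simp] theorem swapPlayers_apply_one (y : E2) : swapPlayers y 1 = y 0 := by simp [swapPlayers]
@[simp] theorem swapPlayers_swapPlayers (y : E2) : swapPlayers (swapPlayers y) = y :=
  E2.ext (by simp) (by simp)

theorem swapPlayers_pt (a b : ℝ) : swapPlayers (pt a b) = pt b a := E2.ext (by simp) (by simp)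

theorem swapPlayers_payoffPD (b c : Bool) : swapPlayers (payoffPD b c) = payoffPD c b := by
  cases b <;> cases c <;> simp [payoffPD, swapPlayers_pt]

theorem swapPlayers_image_SPD : swapPlayers '' SPD = SPD := by
  have h := LinearMap.image_convexHull (swapPlayers.toLinearEquiv : E2 →ₗ[ℝ] E2)
    {pt 2 2, pt 0 3, pt 3 0, pt 1 1}
  simp only [LinearEquiv.coe_coe, LinearIsometryEquiv.coe_toLinearEquiv, image_insert_eq,
    image_singleton, swapPlayers_pt] at h
  rw [SPD, h, insert_comm (pt 3 0)]

theorem swapPlayers_mem_SPD {y : E2} : swapPlayers y ∈ SPD ↔ y ∈ SPD := by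
  conv_lhs => rw [← swapPlayers_image_SPD]
  exact swapPlayers.injective.mem_set_image

theorem IsTrajPD.swapPlayers {f g : E2 → E2} {x : ℕ → E2} (hx : IsTrajPD f x)
    (hfg : ∀ y, g (swapPlayers y) = swapPlayers (f y)) : IsTrajPD g (swapPlayers ∘ x) :=
  ⟨swapPlayers_mem_SPD.2 hx.1, fun t ht => by simp [hx.2 t ht, hfg]⟩

theorem side_swapPlayers (v y : E2) : side (swapPlayers v) y = -side v (swapPlayers y) := by
  simp only [side, swapPlayers_apply_zero, swapPlayers_apply_one]
  ring

theorem preimage_swapPlayers_T2 (hv₀ : 1 < v 0) (hv₁ : 1 < v 1) :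
    swapPlayers ⁻¹' T2 v = T1 (swapPlayers v) := by
  ext y
  rw [mem_preimage, mem_T2_iff hv₀, mem_T1_iff (by simpa using hv₁), swapPlayers_mem_SPD,
    side_swapPlayers, neg_nonneg]

theorem preimage_swapPlayers_K2 (hv₀ : 1 < v 0) (hv₁ : 1 < v 1) (ε : ℝ) :
    swapPlayers ⁻¹' K2 v ε = K1 (swapPlayers v) ε := by
  rw [K2, K1, ← preimage_swapPlayers_T2 hv₀ hv₁, ← swapPlayers.coe_toIsometryEquiv,
    ← IsometryEquiv.preimage_cthickening, preimage_inter]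
  ext y
  simp only [mem_inter_iff, mem_preimage, mem_ofPred_eq, swapPlayers.coe_toIsometryEquiv,
    swapPlayers_mem_SPD, swapPlayers_apply_zero, swapPlayers_apply_one]
  tauto

theorem semi1_swapPlayers (hv₀ : 1 < v 0) (hv₁ : 1 < v 1) (ε : ℝ) (y : E2) :
    semi1 (swapPlayers v) ε y = semi2 v ε (swapPlayers y) := by
  rw [Bool.eq_iff_iff, semi1_eq_true, semi2_eq_true, ← preimage_swapPlayers_K2 hv₀ hv₁]
  rfl

theorem semi2_swapPlayers (hv₀ : 1 < v 0) (hv₁ : 1 < v 1) (ε : ℝ) (y : E2) :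
    semi2 (swapPlayers v) ε y = semi1 v ε (swapPlayers y) := by
  simpa using (semi1_swapPlayers (v := swapPlayers v) (by simpa using hv₁) (by simpa using hv₀) ε
    (swapPlayers y)).symm

theorem semiProfile_swapPlayers (hv₀ : 1 < v 0) (hv₁ : 1 < v 1) (ε₁ ε₂ : ℝ) (y : E2) :
    semiProfile (swapPlayers v) ε₂ ε₁ (swapPlayers y) = swapPlayers (semiProfile v ε₁ ε₂ y) := by
  simp only [semiProfile, semi1_swapPlayers hv₀ hv₁, semi2_swapPlayers hv₀ hv₁,
    swapPlayers_swapPlayers, swapPlayers_payoffPD]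

end Symmetry

def OnFirstArc (v : E2) : Prop := 1 < v 0 ∧ v 0 ≤ 2 ∧ v 1 = 3 - v 0 / 2

theorem OnFirstArc.one_lt {v : E2} (hv : OnFirstArc v) : 1 < v 0 ∧ 1 < v 1 := by
  obtain ⟨h₀, h₂, h₁⟩ := hv
  exact ⟨h₀, by linarith⟩

theorem onFirstArc_or_onFirstArc_swapPlayers {v : E2} (hv : v ∈ BPD) (hv₁ : v ≠ pt 1 (5 / 2))
    (hv₂ : v ≠ pt (5 / 2) 1) : OnFirstArc v ∨ OnFirstArc (swapPlayers v) := by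
  rcases hv with ⟨a, ha₁, ha₂, rfl⟩ | ⟨a, ha₁, ha₂, rfl⟩
  · refine Or.inl ⟨lt_of_le_of_ne ha₁ ?_, ha₂, rfl⟩
    rintro rfl
    exact hv₁ (by norm_num)
  · refine Or.inr ⟨lt_of_le_of_ne ha₁ ?_, by simpa using ha₂, by simp⟩
    rintro rfl
    exact hv₂ (by norm_num)

section SemiCooperativeTrajectory

variable {v : E2} {ε₁ ε₂ : ℝ} {x : ℕ → E2}

theorem IsTrajPD.eventually_fst_le (hx : IsTrajPD (semiProfile v ε₁ ε₂) x) (hv : 1 ≤ v 0)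
    {δ : ℝ} (hδ : 0 < δ) : ∀ᶠ t in atTop, x t 0 ≤ v 0 + δ := by
  refine hx.eventually_le_add (finite_range_semiProfile v ε₁ ε₂) (φ := fun y => y 0)
    (fun y z s => by simp) (Eventually.of_forall fun t h => ?_) hδ
  rw [semiProfile, semi2_eq_false_of_lt h]
  cases semi1 v ε₁ (x t) <;> simp [payoffPD] <;> linarith

theorem IsTrajPD.eventually_snd_le (hx : IsTrajPD (semiProfile v ε₁ ε₂) x) (hv : 1 ≤ v 1)
    {δ : ℝ} (hδ : 0 < δ) : ∀ᶠ t in atTop, x t 1 ≤ v 1 + δ := by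
  refine hx.eventually_le_add (finite_range_semiProfile v ε₁ ε₂) (φ := fun y => y 1)
    (fun y z s => by simp) (Eventually.of_forall fun t h => ?_) hδ
  rw [semiProfile, semi1_eq_false_of_lt h]
  cases semi2 v ε₂ (x t) <;> simp [payoffPD] <;> linarith

theorem IsTrajPD.eventually_neg_le_side (hx : IsTrajPD (semiProfile v ε₁ ε₂) x)
    (hv₀ : 1 < v 0) (hv₁ : 1 < v 1) (hv : v 0 ≤ v 1) {δ : ℝ} (hδ : 0 < δ) :
    ∀ᶠ t in atTop, -δ ≤ side v (x t) := by
  refine (hx.eventually_le_add (finite_range_semiProfile v ε₁ ε₂) (φ := fun y => -side v y)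
    (fun y z s => by simp only [side, PiLp.add_apply, PiLp.smul_apply, smul_eq_mul]; ring)
    (θ := 0) (Eventually.of_forall fun t h => ?_) hδ).mono fun t h => by linarith
  -- while the average is above the line, the payoff `(0, 3)` below it is excluded
  have h₁₂ : semi1 v ε₁ (x t) = true → semi2 v ε₂ (x t) = true := fun h₁ =>
    semi2_eq_true.2 (mem_K2_of_mem_K1 hv₀ hv₁ (semi1_eq_true.1 h₁) (by linarith))
  simp only [semiProfile]
  cases h₁ : semi1 v ε₁ (x t) <;> cases h₂ : semi2 v ε₂ (x t) <;> simp_all [payoffPD, side]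
  linarith

theorem IsTrajPD.eventually_three_le_add (hx : IsTrajPD (semiProfile v ε₁ ε₂) x)
    (hv₀ : 1 < v 0) (hv₁ : 1 < v 1) (hv : 3 ≤ v 0 + v 1) {δ : ℝ} (hδ : 0 < δ) :
    ∀ᶠ t in atTop, 3 - δ ≤ x t 0 + x t 1 := by
  refine (hx.eventually_le_add (finite_range_semiProfile v ε₁ ε₂)
    (φ := fun y => -(y 0 + y 1)) (fun y z s => by simp; ring) (θ := -3) ?_ hδ).mono
    fun t h => by linarith
  filter_upwards [eventually_ge_atTop 1] with t ht h
  have hS := hx.mem_SPD (fun y => payoffPD_mem_SPD _ _) ht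
  -- the payoff `(1, 1)` only occurs beyond `v` in both coordinates, where `y₀ + y₁ > 3`
  have h₁₂ : semi1 v ε₁ (x t) = false → semi2 v ε₂ (x t) = false → False := fun h₁ h₂ => by
    have := lt_of_notMem_K1_of_notMem_K2 hv₀ hv₁ hS
      (by simpa [← semi1_eq_true] using h₁) (by simpa [← semi2_eq_true] using h₂)
    linarith
  simp only [semiProfile]
  cases h₁ : semi1 v ε₁ (x t) <;> cases h₂ : semi2 v ε₂ (x t) <;> simp_all [payoffPD]
  norm_num

theorem IsTrajPD.eventually_semi1_eq_true (hx : IsTrajPD (semiProfile v ε₁ ε₂) x)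
    (hv : OnFirstArc v) (hε₁ : 0 < ε₁) {η : ℝ} (hη : 0 < η) :
    ∀ᶠ t in atTop, η < 3 - (x t 1 + x t 0 / 2) → semi1 v ε₁ (x t) = true := by
  obtain ⟨hv₀, hv₂, hv₁₀⟩ := hv
  have hv₁ : 1 < v 1 := by linarith
  obtain ⟨μ, hμ, hK1⟩ := exists_side_lt_of_notMem_K1 hv₀ hv₁ hε₁
  obtain ⟨δ, hδ, hδμ, hδv, hδ₁, hδη⟩ :
      ∃ δ > 0, δ < μ ∧ δ ≤ (v 0 - 1) / 2 ∧ δ ≤ 1 / 2 ∧ δ ≤ η / 2 := by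
    refine ⟨min (min μ (v 0 - 1)) (min 1 η) / 2, by positivity, ?_, ?_, ?_, ?_⟩ <;>
      linarith [min_le_left (min μ (v 0 - 1)) (min 1 η), min_le_right (min μ (v 0 - 1)) (min 1 η),
        min_le_left μ (v 0 - 1), min_le_right μ (v 0 - 1), min_le_left 1 η, min_le_right 1 η]
  filter_upwards [hx.eventually_neg_le_side hv₀ hv₁ (by linarith) hδ,
    hx.eventually_three_le_add hv₀ hv₁ (by linarith) hδ, eventually_ge_atTop 1]
    with t hside hsum ht hgap
  by_contra hC
  have hS := hx.mem_SPD (fun y => payoffPD_mem_SPD _ _) ht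
  unfold side at hside
  -- the first two alternatives contradict `hside` and `hsum` as `δ` is small; in the third,
  -- `hside` puts `x t` within `δ / 2` of the edge `y₁ + y₀ / 2 = 3`
  rcases hK1 (x t) hS (by rwa [← semi1_eq_true]) with h | h | h
  · unfold side at h
    linarith
  · nlinarith [mul_pos (sub_pos.2 hv₁) (sub_pos.2 h)]
  · nlinarith [mul_pos (sub_pos.2 hv₀) (sub_pos.2 h)]

theorem IsTrajPD.eventually_edge_ge (hx : IsTrajPD (semiProfile v ε₁ ε₂) x)
    (hv : OnFirstArc v) (hε₁ : 0 < ε₁) {η : ℝ} (hη : 0 < η) :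
    ∀ᶠ t in atTop, 3 - η ≤ x t 1 + x t 0 / 2 := by
  refine (hx.eventually_le_add (finite_range_semiProfile v ε₁ ε₂)
    (φ := fun y => 3 - (y 1 + y 0 / 2)) (fun y z s => by simp; ring) (θ := η / 2)
    ((hx.eventually_semi1_eq_true hv hε₁ (half_pos hη)).mono fun t h hgap => ?_)
    (half_pos hη)).mono fun t h => by linarith
  -- when player 1 cooperates the payoff lies on the edge `y₁ + y₀ / 2 = 3` of `𝔖`
  simp only [semiProfile, h hgap]
  cases semi2 v ε₂ (x t) <;> simp [payoffPD] <;> linarith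

theorem IsTrajPD.tendsto_of_onFirstArc (hx : IsTrajPD (semiProfile v ε₁ ε₂) x)
    (hv : OnFirstArc v) (hε₁ : 0 < ε₁) : Tendsto x atTop (𝓝 v) := by
  obtain ⟨hv₀, hv₁⟩ := hv.one_lt
  refine tendsto_of_forall_abs_sub_le fun δ hδ => ?_
  filter_upwards [hx.eventually_fst_le hv₀.le (by positivity : 0 < δ / 4),
    hx.eventually_snd_le hv₁.le (by positivity : 0 < δ / 4),
    hx.eventually_edge_ge hv hε₁ (by positivity : 0 < δ / 4)] with t h₀ h₁ he
  have hv₁₀ := hv.2.2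
  exact ⟨abs_le.2 ⟨by linarith, by linarith⟩, abs_le.2 ⟨by linarith, by linarith⟩⟩

end SemiCooperativeTrajectory

/-- Theorem 4.1, first part: if both players play semi-cooperative strategies
determined by the same point v of the β-core (minus its endpoints), then every
trajectory of average payoffs, from any initial point in 𝔖, converges to v. -/
theorem stmt10 (v : E2) (hv : v ∈ BPD) (hv1 : v ≠ pt 1 (5 / 2)) (hv2 : v ≠ pt (5 / 2) 1)
    (ε₁ ε₂ : ℝ) (hε₁ : 0 < ε₁) (hε₂ : 0 < ε₂) (x : ℕ → E2)
    (hx : IsTrajPD (fun p => payoffPD (semi1 v ε₁ p) (semi2 v ε₂ p)) x) :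
    Tendsto x atTop (nhds v) := by
  rcases onFirstArc_or_onFirstArc_swapPlayers hv hv1 hv2 with hv' | hv'
  · exact hx.tendsto_of_onFirstArc hv' hε₁
  · obtain ⟨hv₁, hv₀⟩ := hv'.one_lt
    have hswap : IsTrajPD (semiProfile (swapPlayers v) ε₂ ε₁) (swapPlayers ∘ x) :=
      hx.swapPlayers (semiProfile_swapPlayers (by simpa using hv₀) (by simpa using hv₁) ε₁ ε₂)
    simpa [Function.comp_def] using
      (swapPlayers.continuous.tendsto _).comp (hswap.tendsto_of_onFirstArc hv' hε₂)
end

section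
/- Let v ∈ B_PD \ {(1,2.5),(2.5,1)} and ε₁ > 0. If player 1 plays the semi-cooperative strategy s₁^{v,ε₁} and player 2 plays an arbitrary memory strategy s₂, then every trajectory (x̄_t)_{t≥1} = ((x̄¹_t, x̄²_t))_{t≥1} of the dynamical system induced by (s₁^{v,ε₁}, s₂), from any initial point in 𝔖, satisfies liminf_{t→∞} x̄¹_t ≥ 1 and limsup_{t→∞} x̄²_t ≤ v₂. -/
/-! Whenever the running average of player 1's payoff drops below 1, or that of player 2's
payoff rises above `v₂`, the average lies outside `K₁(v, ε)` and player 1 defects; a defection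
pays player 1 at least 1 and player 2 at most `1 ≤ v₂`. So each stage can push the average
across the threshold only by a term of order `1/t`, and an induction on `t` shows that
`t · (1 - x̄¹_t)` and `t · (x̄²_t - v₂)` stay bounded. -/

open Filter Set

def IsRunningAvg (a y : ℕ → ℝ) : Prop :=
  ∀ t : ℕ, 1 ≤ t → y (t + 1) = ((t : ℝ) + 1)⁻¹ * ((t : ℝ) * y t + a t)

namespace IsRunningAvg

variable {a y : ℕ → ℝ} {c M B : ℝ}

lemma neg (h : IsRunningAvg a y) : IsRunningAvg (-a) (-y) := fun t ht => by
  simp only [Pi.neg_apply, h t ht]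
  ring

lemma succ_mul_sub (h : IsRunningAvg a y) {t : ℕ} (ht : 1 ≤ t) :
    ((t : ℝ) + 1) * (c - y (t + 1)) = t * (c - y t) + (c - a t) := by
  rw [h t ht]
  field_simp
  ring

theorem natCast_mul_sub_le (h : IsRunningAvg a y) (hM : ∀ t, c - a t ≤ M)
    (hfloor : ∀ t, y t < c → c ≤ a t) (h₁ : c - y 1 ≤ M) :
    ∀ t : ℕ, 1 ≤ t → (t : ℝ) * (c - y t) ≤ M := by
  intro t ht
  induction t, ht using Nat.le_induction with
  | base => simpa using h₁
  | succ t ht ih =>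
    push_cast
    rw [h.succ_mul_sub ht]
    rcases lt_or_ge (y t) c with hlt | hge
    · linarith [hfloor t hlt]
    · have : (t : ℝ) * (c - y t) ≤ 0 :=
        mul_nonpos_of_nonneg_of_nonpos (Nat.cast_nonneg t) (by linarith)
      linarith [hM t]

theorem natCast_mul_sub_le' (h : IsRunningAvg a y) (hM : ∀ t, a t - c ≤ M)
    (hceil : ∀ t, c < y t → a t ≤ c) (h₁ : y 1 - c ≤ M) :
    ∀ t : ℕ, 1 ≤ t → (t : ℝ) * (y t - c) ≤ M := by
  intro t ht
  have := h.neg.natCast_mul_sub_le (c := -c) (fun t => by simpa [add_comm] using hM t)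
    (fun t ht => by simpa using hceil t (by simpa using ht)) (by simpa [add_comm] using h₁) t ht
  simp only [Pi.neg_apply, sub_neg_eq_add] at this
  linarith

lemma le_of_forall_le (h : IsRunningAvg a y) (ha : ∀ t, a t ≤ B) (h₁ : y 1 ≤ B) {t : ℕ}
    (ht : 1 ≤ t) : y t ≤ B := by
  have := h.natCast_mul_sub_le' (M := 0) (fun t => by linarith [ha t]) (fun t _ => ha t)
    (by linarith) t ht
  have htpos : (0 : ℝ) < t := by exact_mod_cast ht
  nlinarith

lemma ge_of_forall_ge (h : IsRunningAvg a y) (ha : ∀ t, B ≤ a t) (h₁ : B ≤ y 1) {t : ℕ}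
    (ht : 1 ≤ t) : B ≤ y t := by
  have := h.natCast_mul_sub_le (M := 0) (fun t => by linarith [ha t]) (fun t _ => ha t)
    (by linarith) t ht
  have htpos : (0 : ℝ) < t := by exact_mod_cast ht
  nlinarith

end IsRunningAvg

lemma le_liminf_of_natCast_mul_sub_le {y : ℕ → ℝ} {c M B : ℝ} (hB : ∀ t, 1 ≤ t → y t ≤ B)
    (h : ∀ t : ℕ, 1 ≤ t → (t : ℝ) * (c - y t) ≤ M) : c ≤ liminf y atTop := by
  have hlow : ∀ᶠ t : ℕ in atTop, c - M / t ≤ y t := by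
    filter_upwards [eventually_ge_atTop 1] with t ht
    have htpos : (0 : ℝ) < t := by exact_mod_cast ht
    have := (div_le_div_iff_of_pos_right htpos).2 (h t ht)
    rw [mul_div_cancel_left₀ _ htpos.ne'] at this
    linarith
  have hlim : Tendsto (fun t : ℕ => c - M / t) atTop (nhds c) := by
    simpa using tendsto_const_nhds.sub (tendsto_const_div_atTop_nhds_zero_nat M)
  have hco : IsCoboundedUnder (· ≥ ·) atTop y :=
    isCoboundedUnder_ge_of_eventually_le atTop (eventually_atTop.2 ⟨1, hB⟩)
  calc c = liminf (fun t : ℕ => c - M / t) atTop := hlim.liminf_eq.symm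
    _ ≤ liminf y atTop := liminf_le_liminf hlow hlim.isBoundedUnder_ge hco

lemma limsup_le_of_natCast_mul_sub_le {y : ℕ → ℝ} {c M B : ℝ} (hB : ∀ t, 1 ≤ t → B ≤ y t)
    (h : ∀ t : ℕ, 1 ≤ t → (t : ℝ) * (y t - c) ≤ M) : limsup y atTop ≤ c := by
  have hup : ∀ᶠ t : ℕ in atTop, y t ≤ c + M / t := by
    filter_upwards [eventually_ge_atTop 1] with t ht
    have htpos : (0 : ℝ) < t := by exact_mod_cast ht
    have := (div_le_div_iff_of_pos_right htpos).2 (h t ht)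
    rw [mul_div_cancel_left₀ _ htpos.ne'] at this
    linarith
  have hlim : Tendsto (fun t : ℕ => c + M / t) atTop (nhds c) := by
    simpa using tendsto_const_nhds.add (tendsto_const_div_atTop_nhds_zero_nat M)
  have hco : IsCoboundedUnder (· ≤ ·) atTop y :=
    isCoboundedUnder_le_of_eventually_le atTop (eventually_atTop.2 ⟨1, hB⟩)
  calc limsup y atTop ≤ limsup (fun t : ℕ => c + M / t) atTop :=
        limsup_le_limsup hup hco hlim.isBoundedUnder_le
    _ = c := hlim.limsup_eq

lemma mem_Icc_of_mem_SPD {z : E2} (hz : z ∈ SPD) (i : Fin 2) : z i ∈ Icc (0 : ℝ) 3 := by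
  have hconv : Convex ℝ {w : E2 | w i ∈ Icc (0 : ℝ) 3} :=
    (convex_Icc (0 : ℝ) 3).linear_preimage (EuclideanSpace.proj i : E2 →L[ℝ] ℝ).toLinearMap
  refine convexHull_min ?_ hconv hz
  rintro w (rfl | rfl | rfl | rfl) <;> fin_cases i <;> norm_num [pt]

lemma payoffPD_mem_Icc (p q : Bool) (i : Fin 2) : payoffPD p q i ∈ Icc (0 : ℝ) 3 := by
  cases p <;> cases q <;> fin_cases i <;> norm_num [payoffPD, pt]

lemma one_le_payoffPD_false_zero (q : Bool) : 1 ≤ payoffPD false q 0 := by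
  cases q <;> norm_num [payoffPD, pt]

lemma payoffPD_false_one_le_one (q : Bool) : payoffPD false q 1 ≤ 1 := by
  cases q <;> norm_num [payoffPD, pt]

lemma one_le_of_mem_BPD {v : E2} (hv : v ∈ BPD) : 1 ≤ v 1 := by
  rcases hv with ⟨a, ha1, ha2, rfl⟩ | ⟨a, ha1, ha2, rfl⟩ <;> norm_num [pt] <;> linarith

lemma semi1_eq_false {v x : E2} {ε : ℝ} (hx : x 0 < 1 ∨ v 1 < x 1) : semi1 v ε x = false := by
  have : x ∉ K1 v ε := fun hK => by
    obtain ⟨-, -, h0, h1⟩ := hK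
    rcases hx with hx | hx <;> linarith
  simp [semi1, this]

lemma IsTrajPD.isRunningAvg {f : E2 → E2} {x : ℕ → E2} (hx : IsTrajPD f x) (i : Fin 2) :
    IsRunningAvg (fun t => f (x t) i) (fun t => x t i) := fun t ht => by
  beta_reduce
  rw [hx.2 t ht]
  simp only [PiLp.smul_apply, PiLp.add_apply, smul_eq_mul]

section SemiCooperative

variable {v : E2} {ε : ℝ} {s₂ : E2 → Bool} {x : ℕ → E2}
  (hx : IsTrajPD (fun p => payoffPD (semi1 v ε p) (s₂ p)) x)
include hx

lemma IsTrajPD.mem_Icc (i : Fin 2) {t : ℕ} (ht : 1 ≤ t) : x t i ∈ Icc (0 : ℝ) 3 :=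
  ⟨(hx.isRunningAvg i).ge_of_forall_ge (fun _ => (payoffPD_mem_Icc _ _ i).1)
      (mem_Icc_of_mem_SPD hx.1 i).1 ht,
    (hx.isRunningAvg i).le_of_forall_le (fun _ => (payoffPD_mem_Icc _ _ i).2)
      (mem_Icc_of_mem_SPD hx.1 i).2 ht⟩

lemma IsTrajPD.natCast_mul_one_sub_le {t : ℕ} (ht : 1 ≤ t) : (t : ℝ) * (1 - x t 0) ≤ 1 :=
  (hx.isRunningAvg 0).natCast_mul_sub_le
    (fun t => by linarith [(payoffPD_mem_Icc (semi1 v ε (x t)) (s₂ (x t)) 0).1])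
    (fun t ht => by simpa [semi1_eq_false (Or.inl ht)] using one_le_payoffPD_false_zero _)
    (by linarith [(mem_Icc_of_mem_SPD hx.1 0).1]) t ht

lemma IsTrajPD.natCast_mul_sub_le (hv : 1 ≤ v 1) {t : ℕ} (ht : 1 ≤ t) :
    (t : ℝ) * (x t 1 - v 1) ≤ 3 - v 1 :=
  (hx.isRunningAvg 1).natCast_mul_sub_le'
    (fun t => by linarith [(payoffPD_mem_Icc (semi1 v ε (x t)) (s₂ (x t)) 1).2])
    (fun t ht => by
      simpa [semi1_eq_false (Or.inr ht)] using (payoffPD_false_one_le_one _).trans hv)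
    (by linarith [(mem_Icc_of_mem_SPD hx.1 1).2]) t ht

end SemiCooperative

theorem stmt11_general (v : E2) (hv : v ∈ BPD)
    (ε₁ : ℝ) (s₂ : E2 → Bool) (x : ℕ → E2)
    (hx : IsTrajPD (fun p => payoffPD (semi1 v ε₁ p) (s₂ p)) x) :
    1 ≤ liminf (fun t => x t 0) atTop ∧ limsup (fun t => x t 1) atTop ≤ v 1 :=
  ⟨le_liminf_of_natCast_mul_sub_le (fun _ ht => (hx.mem_Icc 0 ht).2)
      fun _ => hx.natCast_mul_one_sub_le,
    limsup_le_of_natCast_mul_sub_le (fun _ ht => (hx.mem_Icc 1 ht).1)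
      fun _ => hx.natCast_mul_sub_le (one_le_of_mem_BPD hv)⟩

/-- Theorem 4.1, second part: if player 1 plays the semi-cooperative strategy
determined by v and ε₁ and player 2 plays an arbitrary memory strategy, then every
trajectory of average payoffs, from any initial point in 𝔖, satisfies
liminf x̄¹_t ≥ 1 and limsup x̄²_t ≤ v₂. -/
theorem stmt11 (v : E2) (hv : v ∈ BPD) (hv1 : v ≠ pt 1 (5 / 2)) (hv2 : v ≠ pt (5 / 2) 1)
    (ε₁ : ℝ) (hε₁ : 0 < ε₁) (s₂ : E2 → Bool) (x : ℕ → E2)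
    (hx : IsTrajPD (fun p => payoffPD (semi1 v ε₁ p) (s₂ p)) x) :
    1 ≤ liminf (fun t => x t 0) atTop ∧ limsup (fun t => x t 1) atTop ≤ v 1 :=
  stmt11_general v hv ε₁ s₂ x hx
end
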